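/- Let E and F be Banach spaces. Suppose that neither E nor the dual F* has the Schur property, and that every bounded linear operator from F* into E** is completely continuous. Then the injective tensor product E ⊗̂ε F does not have the Dunford–Pettis property. -/

import Mathlib

open Filter Topology MeasureTheory

/-- A sequence in a normed space is *weakly null* if it converges to `0` in the weak topology,
i.e. `φ (x n) → 0` for every continuous linear functional `φ`. -/
def WeaklyNull {E : Type*} [NormedAddCommGroup E] [NormedSpace ℝ E] (x : ℕ → E) : Prop :=
  ∀ φ : E →L[ℝ] ℝ, Tendsto (fun n => φ (x n)) atTop (𝓝 0)

/-- An operator is *completely continuous* if it maps weakly convergent sequences to norm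
convergent sequences. -/
def CompletelyContinuous {E F : Type*} [NormedAddCommGroup E] [NormedSpace ℝ E]
    [NormedAddCommGroup F] [NormedSpace ℝ F] (T : E →L[ℝ] F) : Prop :=
  ∀ (x : ℕ → E) (x₀ : E),
    (∀ φ : E →L[ℝ] ℝ, Tendsto (fun n => φ (x n)) atTop (𝓝 (φ x₀))) →
    Tendsto (fun n => T (x n)) atTop (𝓝 (T x₀))

/-- A Banach space has the *Schur property* if every weakly null sequence is norm null. -/
def SchurProperty (E : Type*) [NormedAddCommGroup E] [NormedSpace ℝ E] : Prop :=
  ∀ x : ℕ → E, WeaklyNull x → Tendsto x atTop (𝓝 0)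

/-- A Banach space has the *Dunford–Pettis property* if `φₙ(xₙ) → 0` whenever `(xₙ)` is weakly
null in `E` and `(φₙ)` is weakly null in the dual `E*`. -/
def DunfordPettisProperty (E : Type*) [NormedAddCommGroup E] [NormedSpace ℝ E] : Prop :=
  ∀ (x : ℕ → E) (φ : ℕ → E →L[ℝ] ℝ), WeaklyNull x → WeaklyNull φ →
    Tendsto (fun n => φ n (x n)) atTop (𝓝 0)

/-- `F` contains a (closed, isomorphic) copy of `X`: there is an isomorphic embedding of `X`
into `F` (its range is automatically a closed subspace when `X` is complete). -/
def ContainsCopy (F X : Type*) [NormedAddCommGroup F] [NormedSpace ℝ F]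
    [NormedAddCommGroup X] [NormedSpace ℝ X] : Prop :=
  ∃ (e : X →L[ℝ] F) (c : ℝ), 0 < c ∧ ∀ x, c * ‖x‖ ≤ ‖e x‖

/-- `F` contains a *complemented* copy of `X`: there is an embedding `e : X → F` admitting a
bounded linear left inverse (equivalently, a complemented closed subspace isomorphic to `X`). -/
def ContainsComplementedCopy (F X : Type*) [NormedAddCommGroup F] [NormedSpace ℝ F]
    [NormedAddCommGroup X] [NormedSpace ℝ X] : Prop :=
  ∃ (e : X →L[ℝ] F) (r : F →L[ℝ] X), r.comp e = ContinuousLinearMap.id ℝ X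

/-- A realization of the projective tensor product `E ⊗̂π F` as a Banach space `X`:
a bounded bilinear map `tmul` of norm `≤ 1` whose range spans a dense subspace, and such that
every bounded bilinear form on `E × F` lifts to a functional on `X` of no greater norm.
Together with completeness of `X`, these properties characterize `E ⊗̂π F` up to isometric
isomorphism. -/
structure ProjectiveTensorProduct (X E F : Type*) [NormedAddCommGroup X] [NormedSpace ℝ X]
    [NormedAddCommGroup E] [NormedSpace ℝ E] [NormedAddCommGroup F] [NormedSpace ℝ F] where
  tmul : E →L[ℝ] F →L[ℝ] X
  norm_tmul_le : ∀ x y, ‖tmul x y‖ ≤ ‖x‖ * ‖y‖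
  dense_span : Dense (↑(Submodule.span ℝ (Set.range fun p : E × F => tmul p.1 p.2)) : Set X)
  lift : ∀ B : E →L[ℝ] F →L[ℝ] ℝ, ∃ φ : X →L[ℝ] ℝ, ‖φ‖ ≤ ‖B‖ ∧ ∀ x y, φ (tmul x y) = B x y

/-- A realization of the injective tensor product `E ⊗̂ε F` as a Banach space `X`:
a bilinear map `tmul` whose range spans a dense subspace and such that the norm of any finite
sum of elementary tensors is the injective norm
`sup { |Σ φ(xᵢ) ψ(yᵢ)| : ‖φ‖ ≤ 1, ‖ψ‖ ≤ 1 }`.  Together with completeness of `X`, these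
properties characterize `E ⊗̂ε F` up to isometric isomorphism. -/
structure InjectiveTensorProduct (X E F : Type*) [NormedAddCommGroup X] [NormedSpace ℝ X]
    [NormedAddCommGroup E] [NormedSpace ℝ E] [NormedAddCommGroup F] [NormedSpace ℝ F] where
  tmul : E →L[ℝ] F →L[ℝ] X
  dense_span : Dense (↑(Submodule.span ℝ (Set.range fun p : E × F => tmul p.1 p.2)) : Set X)
  norm_sum : ∀ (n : ℕ) (x : Fin n → E) (y : Fin n → F),
    ‖∑ i, tmul (x i) (y i)‖ =
      sSup { r : ℝ | ∃ (φ : E →L[ℝ] ℝ) (ψ : F →L[ℝ] ℝ), ‖φ‖ ≤ 1 ∧ ‖ψ‖ ≤ 1 ∧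
        r = |∑ i, φ (x i) * ψ (y i)| }

/-- The Banach space `ℓ₁` of absolutely summable real sequences. -/
noncomputable abbrev ellOne : Type := lp (fun _ : ℕ => ℝ) 1

/-!
Choose weakly null sequences `xₙ` in `E` and `ψₙ` in `F*` bounded away from `0`, functionals
`φₙ` of norm one with `φₙ xₙ = ‖xₙ‖`, and unit vectors `yₙ` with `ψₙ yₙ ≥ ε / 2`. Then
`(φₙ ⊗ ψₙ)(xₙ ⊗ yₙ) = φₙ(xₙ) ψₙ(yₙ)` stays away from `0`, although both sequences are weakly null.
For `Θ ∈ X**`, `Θ (φₙ ⊗ ψₙ) = (T ψₙ)(φₙ)` for an operator `T : F* → E**`, which is completely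
continuous by hypothesis. For `Φ ∈ X*`, the injective norm makes `z ↦ Φ (z ⊗ ·) : E → F*`
absolutely summing, so by Pietsch domination `‖Φ (xₙ ⊗ ·)‖ ≤ ‖Φ‖ ∫ |φ xₙ| dμ(φ)` for a measure `μ`
on the weak-* compact dual unit ball, and the right side tends to `0` by dominated convergence.
-/

open Set
open scoped TensorProduct

lemma WeaklyNull.exists_bound {E : Type*} [NormedAddCommGroup E] [NormedSpace ℝ E] {x : ℕ → E}
    (hx : WeaklyNull x) : ∃ M, ∀ n, ‖x n‖ ≤ M := by
  obtain ⟨M, hM⟩ := banach_steinhaus (g := fun n => NormedSpace.inclusionInDoubleDualLi ℝ (x n))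
    fun φ => by
      obtain ⟨C, hC⟩ := (hx φ).norm.bddAbove_range
      exact ⟨C, fun n => hC ⟨n, rfl⟩⟩
  exact ⟨M, fun n => (LinearIsometry.norm_map _ (x n)).symm.trans_le (hM n)⟩

lemma CompletelyContinuous.tendsto_zero_of_weaklyNull {E F : Type*} [NormedAddCommGroup E]
    [NormedSpace ℝ E] [NormedAddCommGroup F] [NormedSpace ℝ F] {T : E →L[ℝ] F}
    (hT : CompletelyContinuous T) {x : ℕ → E} (hx : WeaklyNull x) :
    Tendsto (fun n => T (x n)) atTop (𝓝 0) := by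
  simpa using hT x 0 fun φ => by simpa using hx φ

lemma WeaklyNull.apply_apply {A B Z : Type*} [NormedAddCommGroup A] [NormedSpace ℝ A]
    [NormedAddCommGroup B] [NormedSpace ℝ B] [NormedAddCommGroup Z] [NormedSpace ℝ Z]
    (β : A →L[ℝ] B →L[ℝ] Z) (hβ : ∀ T : B →L[ℝ] (A →L[ℝ] ℝ), CompletelyContinuous T)
    {a : ℕ → A} {M : ℝ} (ha : ∀ n, ‖a n‖ ≤ M) {b : ℕ → B} (hb : WeaklyNull b) :
    WeaklyNull fun n => β (a n) (b n) := by
  intro Θ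
  set T : B →L[ℝ] (A →L[ℝ] ℝ) := (ContinuousLinearMap.compL ℝ A Z ℝ Θ).comp β.flip
  have hT := tendsto_norm_zero.comp ((hβ T).tendsto_zero_of_weaklyNull hb)
  refine squeeze_zero_norm (fun n => ?_) (by simpa using hT.mul_const M)
  exact ((T (b n)).le_opNorm (a n)).trans (by gcongr; exact ha n)

lemma exists_weaklyNull_le_norm_of_not_schurProperty {E : Type*} [NormedAddCommGroup E]
    [NormedSpace ℝ E] (hE : ¬ SchurProperty E) :
    ∃ x : ℕ → E, WeaklyNull x ∧ ∃ δ > 0, ∀ n, δ ≤ ‖x n‖ := by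
  obtain ⟨x, hx, hx0⟩ : ∃ x : ℕ → E, WeaklyNull x ∧ ¬ Tendsto x atTop (𝓝 0) := by
    simpa [SchurProperty] using hE
  obtain ⟨s, hs, hfreq⟩ := not_tendsto_iff_exists_frequently_notMem.mp hx0
  obtain ⟨δ, hδ, hball⟩ := Metric.mem_nhds_iff.mp hs
  obtain ⟨k, hk, hkδ⟩ := extraction_of_frequently_atTop (hfreq.mono fun n hn =>
    not_lt.mp fun hlt => hn (hball (mem_ball_zero_iff.mpr hlt)))
  exact ⟨x ∘ k, fun φ => (hx φ).comp hk.tendsto_atTop, δ, hδ, hkδ⟩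

lemma LinearMap.exists_continuousLinearMap_comp_eq {V X : Type*} [AddCommGroup V] [Module ℝ V]
    [NormedAddCommGroup X] [NormedSpace ℝ X] (S : V →ₗ[ℝ] X) (g : V →ₗ[ℝ] ℝ) {C : ℝ}
    (hC : 0 ≤ C) (hg : ∀ w, |g w| ≤ C * ‖S w‖) :
    ∃ Φ : X →L[ℝ] ℝ, ‖Φ‖ ≤ C ∧ ∀ w, Φ (S w) = g w := by
  obtain ⟨σ, hσ⟩ := S.rangeRestrict.exists_rightInverse_of_surjective S.range_rangeRestrict
  have hSσ : ∀ z : S.range, S (σ z) = z := fun z => congrArg Subtype.val (LinearMap.congr_fun hσ z)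
  have hgσ : ∀ w, g (σ (S.rangeRestrict w)) = g w := fun w => by
    have := hg (σ (S.rangeRestrict w) - w)
    rwa [map_sub, map_sub S, hSσ, LinearMap.codRestrict_apply, sub_self, norm_zero, mul_zero,
      abs_nonpos_iff, sub_eq_zero] at this
  let f : S.range →L[ℝ] ℝ := (g ∘ₗ σ).mkContinuous C fun z => by
    simpa [hSσ] using hg (σ z)
  obtain ⟨Φ, hΦf, hΦ⟩ := exists_extension_norm_eq S.range f
  exact ⟨Φ, hΦ ▸ LinearMap.mkContinuous_norm_le _ hC _,
    fun w => (hΦf (S.rangeRestrict w)).trans (hgσ w)⟩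

lemma ContinuousLinearMap.exists_norm_le_one_lt_apply {F : Type*} [NormedAddCommGroup F]
    [NormedSpace ℝ F] (f : F →L[ℝ] ℝ) {r : ℝ} (hr : r < ‖f‖) : ∃ y, ‖y‖ ≤ 1 ∧ r < f y := by
  obtain ⟨y, hy, hry⟩ := f.exists_lt_apply_of_lt_opNorm hr
  rcases le_or_gt 0 (f y) with hpos | hneg
  · exact ⟨y, hy.le, by rwa [Real.norm_of_nonneg hpos] at hry⟩
  · exact ⟨-y, by simpa using hy.le, by rwa [Real.norm_of_nonpos hneg.le, ← map_neg] at hry⟩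

open CompactlySupported CompactlySupportedContinuousMap in
theorem PositiveLinearMap.tendsto_of_tendsto_pointwise {K : Type*} [TopologicalSpace K]
    [CompactSpace K] [T2Space K] (Λ : C(K, ℝ) →ₚ[ℝ] ℝ) {f : ℕ → C(K, ℝ)} {g : C(K, ℝ)} {M : ℝ}
    (hfM : ∀ n x, |f n x| ≤ M) (hfg : ∀ x, Tendsto (fun n => f n x) atTop (𝓝 (g x))) :
    Tendsto (fun n => Λ (f n)) atTop (𝓝 (Λ g)) := by
  let _ : MeasurableSpace K := borel K
  have : BorelSpace K := ⟨rfl⟩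
  let Λc : C_c(K, ℝ) →ₚ[ℝ] ℝ := PositiveLinearMap.mk₀
    { toFun := fun f => Λ f.toContinuousMap
      map_add' := fun _ _ => map_add Λ _ _
      map_smul' := fun _ _ => map_smul Λ _ _ }
    fun f hf => Λ.map_nonneg (show (0 : C(K, ℝ)) ≤ f.toContinuousMap from fun x => hf x)
  have hΛ : ∀ f : C(K, ℝ), Λ f = ∫ x, f x ∂(RealRMK.rieszMeasure Λc) := fun f =>
    (RealRMK.integral_rieszMeasure Λc (continuousMapEquiv f)).symm
  simp only [hΛ]
  exact tendsto_integral_of_dominated_convergence (fun _ => M)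
    (fun n => (f n).continuous.aestronglyMeasurable) (integrable_const M)
    (fun n => .of_forall (hfM n)) (.of_forall hfg)

lemma isOpen_setOf_forall_pos {K : Type*} [TopologicalSpace K] [CompactSpace K] :
    IsOpen {g : C(K, ℝ) | ∀ x, 0 < g x} := by
  simpa [MapsTo] using
    ContinuousMap.isOpen_setOfPred_mapsTo isCompact_univ (isOpen_Ioi (a := (0 : ℝ)))

lemma convex_setOf_forall_pos {K : Type*} [TopologicalSpace K] :
    Convex ℝ {g : C(K, ℝ) | ∀ x, 0 < g x} :=
  fun _ hg _ hh _ _ ha hb hab x => by simpa using convex_Ioi (0 : ℝ) (hg x) (hh x) ha hb hab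

section Pietsch

variable {E G : Type*} [NormedAddCommGroup E] [NormedSpace ℝ E]
  [NormedAddCommGroup G] [NormedSpace ℝ G]

/-- The `1`-summing inequality `∑ ‖T uᵢ‖ ≤ C * sup_{‖φ‖ ≤ 1} ∑ |φ uᵢ|`, required of every upper
bound `b` of the supremum. -/
def ContinuousLinearMap.IsAbsolutelySumming (T : E →L[ℝ] G) (C : ℝ) : Prop :=
  ∀ (n : ℕ) (u : Fin n → E) (b : ℝ), (∀ φ : E →L[ℝ] ℝ, ‖φ‖ ≤ 1 → ∑ i, |φ (u i)| ≤ b) →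
    ∑ i, ‖T (u i)‖ ≤ C * b

variable (E) in
def dualUnitBall : Set (WeakDual ℝ E) := WeakDual.toStrongDual ⁻¹' Metric.closedBall 0 1

instance : CompactSpace (dualUnitBall E) :=
  isCompact_iff_compactSpace.mp (WeakDual.isCompact_closedBall 0 1)

instance : Nonempty (dualUnitBall E) := ⟨⟨0, by simp [dualUnitBall]⟩⟩

lemma norm_le_one_of_mem_dualUnitBall (φ : dualUnitBall E) :
    ‖WeakDual.toStrongDual (φ : WeakDual ℝ E)‖ ≤ 1 := by
  simpa [dualUnitBall] using φ.2

noncomputable def absEval (z : E) : C(dualUnitBall E, ℝ) :=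
  ⟨fun φ => |(φ : WeakDual ℝ E) z|, ((WeakDual.eval_continuous z).comp continuous_subtype_val).abs⟩

@[simp]
lemma absEval_apply (z : E) (φ : dualUnitBall E) : absEval z φ = |(φ : WeakDual ℝ E) z| := rfl

lemma absEval_smul {c : ℝ} (hc : 0 ≤ c) (z : E) : absEval (c • z) = c • absEval z := by
  ext φ
  simp [abs_mul, abs_of_nonneg hc]

namespace ContinuousLinearMap

/-- `T` is absolutely summing exactly when none of these functions is strictly positive. -/
def summingDefects (T : E →L[ℝ] G) (C : ℝ) : Set C(dualUnitBall E, ℝ) :=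
  {g | ∃ (n : ℕ) (u : Fin n → E), g = (∑ i, ‖T (u i)‖) • 1 - C • ∑ i, absEval (u i)}

variable {T : E →L[ℝ] G} {C : ℝ}

lemma smul_mem_summingDefects {g : C(dualUnitBall E, ℝ)} (hg : g ∈ T.summingDefects C)
    {s : ℝ} (hs : 0 ≤ s) : s • g ∈ T.summingDefects C := by
  obtain ⟨n, u, rfl⟩ := hg
  refine ⟨n, fun i => s • u i, ?_⟩
  simp only [map_smul, norm_smul, Real.norm_of_nonneg hs, absEval_smul hs, ← Finset.mul_sum,
    ← Finset.smul_sum, smul_sub, mul_smul, smul_comm C s]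

lemma convex_summingDefects : Convex ℝ (T.summingDefects C) := by
  rintro _ ⟨n, u, rfl⟩ _ ⟨m, v, rfl⟩ a b ha hb -
  refine ⟨n + m, Fin.append (fun i => a • u i) (fun j => b • v j), ?_⟩
  simp only [Fin.sum_univ_add, Fin.append_left, Fin.append_right, map_smul, norm_smul,
    Real.norm_of_nonneg ha, Real.norm_of_nonneg hb, absEval_smul ha, absEval_smul hb,
    ← Finset.mul_sum, ← Finset.smul_sum, smul_sub, add_smul, mul_smul, smul_add, smul_comm C a,
    smul_comm C b]
  abel

lemma IsAbsolutelySumming.exists_nonpos_of_mem_summingDefects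
    (hT : T.IsAbsolutelySumming C) {g : C(dualUnitBall E, ℝ)} (hg : g ∈ T.summingDefects C) :
    ∃ φ, g φ ≤ 0 := by
  obtain ⟨n, u, rfl⟩ := hg
  obtain ⟨φ, -, hφ⟩ := isCompact_univ.exists_isMaxOn univ_nonempty
    (continuous_finsetSum Finset.univ fun i _ => (absEval (u i)).continuous).continuousOn
  refine ⟨φ, ?_⟩
  have hmax : ∀ ψ : E →L[ℝ] ℝ, ‖ψ‖ ≤ 1 → ∑ i, |ψ (u i)| ≤ ∑ i, absEval (u i) φ := fun ψ hψ =>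
    isMaxOn_iff.mp hφ ⟨StrongDual.toWeakDual ψ, by simpa [dualUnitBall] using hψ⟩ (mem_univ _)
  simpa [ContinuousMap.sum_apply] using hT n u _ hmax

/-- Pietsch domination: `Λ` is read off a hyperplane separating the open cone of strictly positive
functions from the convex set `summingDefects`. -/
theorem IsAbsolutelySumming.exists_positiveLinearMap_norm_le (hT : T.IsAbsolutelySumming C) :
    ∃ Λ : C(dualUnitBall E, ℝ) →ₚ[ℝ] ℝ, ∀ z, ‖T z‖ ≤ C * Λ (absEval z) := by
  set P : Set C(dualUnitBall E, ℝ) := {g | ∀ φ, 0 < g φ}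
  have hPD : Disjoint P (T.summingDefects C) := by
    refine Set.disjoint_right.mpr fun g hg hgP => ?_
    obtain ⟨φ, hφ⟩ := hT.exists_nonpos_of_mem_summingDefects hg
    exact (hgP φ).not_ge hφ
  obtain ⟨Ψ, t, hΨP, hΨD⟩ := geometric_hahn_banach_open convex_setOf_forall_pos
    isOpen_setOf_forall_pos convex_summingDefects hPD
  have ht : t ≤ 0 := by simpa using hΨD 0 ⟨0, Fin.elim0, by simp⟩
  have hΨ_neg : ∀ g ∈ P, Ψ g < 0 := fun g hg => (hΨP g hg).trans_le ht
  have hΨ_one : Ψ 1 < 0 := hΨ_neg 1 fun _ => one_pos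
  -- `summingDefects` is a cone, so `Ψ`, being bounded below on it, is nonnegative there.
  have hΨ_defect : ∀ g ∈ T.summingDefects C, 0 ≤ Ψ g := by
    intro g hg
    by_contra! hneg
    have := hΨD _ (smul_mem_summingDefects hg (s := (1 - t) / -Ψ g)
      (div_nonneg (by linarith) (neg_nonneg.mpr hneg.le)))
    rw [map_smul, smul_eq_mul, div_mul_eq_mul_div, div_neg, mul_div_cancel_right₀ _ hneg.ne] at this
    linarith
  have hΨ_nonpos : ∀ g : C(dualUnitBall E, ℝ), 0 ≤ g → Ψ g ≤ 0 := by
    intro g hg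
    refine le_of_forall_pos_lt_add fun ε hε => ?_
    have := hΨ_neg (g + (ε / -Ψ 1) • 1) fun φ => by
      have hgφ : 0 ≤ g φ := hg φ
      have hs : 0 < ε / -Ψ 1 := div_pos hε (neg_pos.mpr hΨ_one)
      simp only [ContinuousMap.add_apply, ContinuousMap.smul_apply, ContinuousMap.one_apply,
        smul_eq_mul, mul_one]
      linarith
    rw [map_add, map_smul, smul_eq_mul, div_mul_eq_mul_div, div_neg,
      mul_div_cancel_right₀ _ hΨ_one.ne] at this
    linarith
  refine ⟨PositiveLinearMap.mk₀ ((Ψ 1)⁻¹ • Ψ.toLinearMap) fun g hg => ?_, fun z => ?_⟩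
  · simpa using mul_nonneg_of_nonpos_of_nonpos (inv_nonpos.mpr hΨ_one.le) (hΨ_nonpos g hg)
  · have := hΨ_defect (‖T z‖ • 1 - C • absEval z) ⟨1, fun _ => z, by simp⟩
    simp only [map_sub, map_smul, smul_eq_mul] at this
    change ‖T z‖ ≤ C * ((Ψ 1)⁻¹ * Ψ (absEval z))
    rw [← div_eq_inv_mul, mul_div_assoc', le_div_iff_of_neg hΨ_one]
    linarith

theorem IsAbsolutelySumming.tendsto_zero_of_weaklyNull (hT : T.IsAbsolutelySumming C)
    {x : ℕ → E} (hx : WeaklyNull x) : Tendsto (fun n => T (x n)) atTop (𝓝 0) := by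
  obtain ⟨Λ, hΛ⟩ := hT.exists_positiveLinearMap_norm_le
  obtain ⟨M, hM⟩ := hx.exists_bound
  have hbound : ∀ n φ, |absEval (x n) φ| ≤ M := fun n φ => by
    rw [absEval_apply, abs_abs]
    exact ((WeakDual.toStrongDual (φ : WeakDual ℝ E)).le_opNorm (x n)).trans
      ((mul_le_of_le_one_left (norm_nonneg _) (norm_le_one_of_mem_dualUnitBall φ)).trans (hM n))
  have hlim : Tendsto (fun n => Λ (absEval (x n))) atTop (𝓝 0) := by
    simpa using Λ.tendsto_of_tendsto_pointwise (g := 0) hbound fun φ => by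
      simpa using (hx (WeakDual.toStrongDual (φ : WeakDual ℝ E))).abs
  refine tendsto_zero_iff_norm_tendsto_zero.mpr (squeeze_zero (fun n => norm_nonneg _)
    (fun n => hΛ (x n)) ?_)
  simpa using hlim.const_mul C

end ContinuousLinearMap

end Pietsch

namespace InjectiveTensorProduct

variable {E F X : Type*} [NormedAddCommGroup E] [NormedSpace ℝ E] [NormedAddCommGroup F]
  [NormedSpace ℝ F] [NormedAddCommGroup X] [NormedSpace ℝ X] (h : InjectiveTensorProduct X E F)

lemma norm_sum_tmul_le {n : ℕ} (x : Fin n → E) (y : Fin n → F) {b : ℝ} (hb : 0 ≤ b)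
    (H : ∀ (φ : E →L[ℝ] ℝ) (ψ : F →L[ℝ] ℝ), ‖φ‖ ≤ 1 → ‖ψ‖ ≤ 1 →
      |∑ i, φ (x i) * ψ (y i)| ≤ b) :
    ‖∑ i, h.tmul (x i) (y i)‖ ≤ b := by
  rw [h.norm_sum]
  exact Real.sSup_le (by rintro _ ⟨φ, ψ, hφ, hψ, rfl⟩; exact H φ ψ hφ hψ) hb

lemma abs_sum_le_norm_sum_tmul_of_norm_le_one {n : ℕ} (x : Fin n → E) (y : Fin n → F)
    {φ : E →L[ℝ] ℝ} {ψ : F →L[ℝ] ℝ} (hφ : ‖φ‖ ≤ 1) (hψ : ‖ψ‖ ≤ 1) :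
    |∑ i, φ (x i) * ψ (y i)| ≤ ‖∑ i, h.tmul (x i) (y i)‖ := by
  rw [h.norm_sum]
  refine le_csSup ⟨∑ i, ‖x i‖ * ‖y i‖, ?_⟩ ⟨φ, ψ, hφ, hψ, rfl⟩
  rintro _ ⟨φ', ψ', hφ', hψ', rfl⟩
  refine (Finset.abs_sum_le_sum_abs _ _).trans (Finset.sum_le_sum fun i _ => ?_)
  rw [abs_mul]
  exact mul_le_mul (φ'.le_of_opNorm_le hφ' (x i) |>.trans_eq (one_mul _))
    (ψ'.le_of_opNorm_le hψ' (y i) |>.trans_eq (one_mul _)) (abs_nonneg _) (norm_nonneg _)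

lemma abs_sum_le_norm_sum_tmul {ι : Type*} [Fintype ι] (x : ι → E) (y : ι → F)
    (φ : E →L[ℝ] ℝ) (ψ : F →L[ℝ] ℝ) :
    |∑ i, φ (x i) * ψ (y i)| ≤ ‖φ‖ * ‖ψ‖ * ‖∑ i, h.tmul (x i) (y i)‖ := by
  let e := (Fintype.equivFin ι).symm
  rw [← e.sum_comp, ← e.sum_comp fun i => h.tmul (x i) (y i)]
  rcases eq_or_ne φ 0 with rfl | hφ
  · simp
  rcases eq_or_ne ψ 0 with rfl | hψ
  · simp
  have key := h.abs_sum_le_norm_sum_tmul_of_norm_le_one (x ∘ e) (y ∘ e)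
    (norm_smul_inv_norm (𝕜 := ℝ) hφ).le (norm_smul_inv_norm (𝕜 := ℝ) hψ).le
  simp only [Function.comp_apply, FunLike.coe_smul, Pi.smul_apply, smul_eq_mul,
    RCLike.ofReal_real_eq_id, id, mul_mul_mul_comm, ← Finset.mul_sum, abs_mul, ← mul_inv] at key
  rwa [abs_of_pos (by positivity), inv_mul_le_iff₀ (by positivity)] at key

lemma exists_dual_tmul (φ : E →L[ℝ] ℝ) (ψ : F →L[ℝ] ℝ) :
    ∃ Φ : X →L[ℝ] ℝ, ‖Φ‖ ≤ ‖φ‖ * ‖ψ‖ ∧ ∀ x y, Φ (h.tmul x y) = φ x * ψ y := by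
  let S : E ⊗[ℝ] F →ₗ[ℝ] X := TensorProduct.lift (ContinuousLinearMap.toLinearMap₁₂ h.tmul)
  let g : E ⊗[ℝ] F →ₗ[ℝ] ℝ :=
    TensorProduct.lift ((LinearMap.mul ℝ ℝ).compl₁₂ (φ : E →ₗ[ℝ] ℝ) (ψ : F →ₗ[ℝ] ℝ))
  have hg : ∀ w, |g w| ≤ ‖φ‖ * ‖ψ‖ * ‖S w‖ := by
    intro w
    obtain ⟨s, rfl⟩ := TensorProduct.exists_finset w
    simp only [map_sum, S, g, TensorProduct.lift.tmul, LinearMap.compl₁₂_apply,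
      LinearMap.mul_apply', ContinuousLinearMap.toLinearMap₁₂_apply, ContinuousLinearMap.coe_coe]
    rw [← s.sum_coe_sort, ← s.sum_coe_sort]
    exact h.abs_sum_le_norm_sum_tmul (fun p : s => p.1.1) (fun p : s => p.1.2) φ ψ
  obtain ⟨Φ, hΦ, hΦg⟩ := S.exists_continuousLinearMap_comp_eq g (by positivity) hg
  exact ⟨Φ, hΦ, fun x y => by simpa [S, g] using hΦg (x ⊗ₜ y)⟩

lemma ext_tmul {G : Type*} [NormedAddCommGroup G] [NormedSpace ℝ G] {Φ₁ Φ₂ : X →L[ℝ] G}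
    (H : ∀ x y, Φ₁ (h.tmul x y) = Φ₂ (h.tmul x y)) : Φ₁ = Φ₂ :=
  ContinuousLinearMap.ext_on h.dense_span fun _ ⟨p, hp⟩ => hp ▸ H p.1 p.2

noncomputable def dualTmul : (E →L[ℝ] ℝ) →L[ℝ] (F →L[ℝ] ℝ) →L[ℝ] (X →L[ℝ] ℝ) :=
  have spec := fun φ ψ => (h.exists_dual_tmul φ ψ).choose_spec
  LinearMap.mkContinuous₂
    (LinearMap.mk₂ ℝ (fun φ ψ => (h.exists_dual_tmul φ ψ).choose)
      (fun φ₁ φ₂ ψ => h.ext_tmul fun x y => by rw [(spec _ _).2]; simp [spec, add_mul])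
      (fun c φ ψ => h.ext_tmul fun x y => by rw [(spec _ _).2]; simp [spec, mul_assoc])
      (fun φ ψ₁ ψ₂ => h.ext_tmul fun x y => by rw [(spec _ _).2]; simp [spec, mul_add])
      (fun c φ ψ => h.ext_tmul fun x y => by rw [(spec _ _).2]; simp [spec, mul_left_comm]))
    1 fun φ ψ => by simpa [mul_assoc] using (spec φ ψ).1

@[simp]
lemma dualTmul_apply_tmul (φ : E →L[ℝ] ℝ) (ψ : F →L[ℝ] ℝ) (x : E) (y : F) :
    h.dualTmul φ ψ (h.tmul x y) = φ x * ψ y :=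
  (h.exists_dual_tmul φ ψ).choose_spec.2 x y

lemma isAbsolutelySumming_comp_tmul (Φ : X →L[ℝ] ℝ) :
    ((ContinuousLinearMap.compL ℝ F X ℝ Φ).comp h.tmul).IsAbsolutelySumming ‖Φ‖ := by
  intro n u b hb
  set T := (ContinuousLinearMap.compL ℝ F X ℝ Φ).comp h.tmul
  have hb0 : 0 ≤ b := by simpa using hb 0 (by simp)
  refine le_of_forall_pos_lt_add fun ε hε => ?_
  set δ := ε / (n + 1)
  have hδ : 0 < δ := by positivity
  choose v hv1 hv using fun i => (T (u i)).exists_norm_le_one_lt_apply (sub_lt_self _ hδ)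
  have hsum : ‖∑ i, h.tmul (u i) (v i)‖ ≤ b := h.norm_sum_tmul_le u v hb0 fun φ ψ hφ hψ => by
    refine (Finset.abs_sum_le_sum_abs _ _).trans ((Finset.sum_le_sum fun i _ => ?_).trans (hb φ hφ))
    rw [abs_mul]
    exact mul_le_of_le_one_right (abs_nonneg _)
      ((ψ.le_of_opNorm_le hψ (v i)).trans (by simpa using hv1 i))
  calc ∑ i, ‖T (u i)‖ ≤ ∑ i, (T (u i) (v i) + δ) := Finset.sum_le_sum fun i _ => by linarith [hv i]
    _ = Φ (∑ i, h.tmul (u i) (v i)) + n * δ := by simp [T, Finset.sum_add_distrib, map_sum]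
    _ ≤ ‖Φ‖ * b + n * δ := by
      gcongr
      exact (le_abs_self _).trans ((Φ.le_opNorm _).trans (by gcongr))
    _ < ‖Φ‖ * b + ε := by
      gcongr
      rw [mul_div_assoc', div_lt_iff₀ (by positivity)]
      linarith

lemma weaklyNull_tmul {x : ℕ → E} (hx : WeaklyNull x) {y : ℕ → F} (hy : ∀ n, ‖y n‖ ≤ 1) :
    WeaklyNull fun n => h.tmul (x n) (y n) := by
  intro Φ
  have hT := (h.isAbsolutelySumming_comp_tmul Φ).tendsto_zero_of_weaklyNull hx
  refine squeeze_zero_norm (fun n => ?_) (tendsto_norm_zero.comp hT)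
  exact ((Φ.comp (h.tmul (x n))).le_opNorm (y n)).trans
    (mul_le_of_le_one_right (norm_nonneg _) (hy n))

end InjectiveTensorProduct

theorem injectiveTensorProduct_not_dunfordPettis_general
    {E F X : Type*} [NormedAddCommGroup E] [NormedSpace ℝ E]
    [NormedAddCommGroup F] [NormedSpace ℝ F]
    [NormedAddCommGroup X] [NormedSpace ℝ X]
    (h : InjectiveTensorProduct X E F)
    (hE : ¬ SchurProperty E)
    (hF : ¬ SchurProperty (F →L[ℝ] ℝ))
    (hcc : ∀ T : (F →L[ℝ] ℝ) →L[ℝ] ((E →L[ℝ] ℝ) →L[ℝ] ℝ),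
      CompletelyContinuous (E := F →L[ℝ] ℝ) (F := (E →L[ℝ] ℝ) →L[ℝ] ℝ) T) :
    ¬ DunfordPettisProperty X := by
  intro hDP
  obtain ⟨x, hx, δ, hδ, hxδ⟩ := exists_weaklyNull_le_norm_of_not_schurProperty hE
  obtain ⟨ψ, hψ, ε, hε, hψε⟩ := exists_weaklyNull_le_norm_of_not_schurProperty hF
  choose φ hφ1 hφx using fun n => exists_dual_vector ℝ (x n) (hδ.trans_le (hxδ n)).ne'
  choose y hy1 hψy using fun n =>
    (ψ n).exists_norm_le_one_lt_apply (half_lt_self hε |>.trans_le (hψε n))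
  have hlim := hDP _ _ (h.weaklyNull_tmul hx hy1)
    (WeaklyNull.apply_apply h.dualTmul hcc (fun n => (hφ1 n).le) hψ)
  have hlow : ∀ n, δ * (ε / 2) ≤ h.dualTmul (φ n) (ψ n) (h.tmul (x n) (y n)) := fun n => by
    rw [h.dualTmul_apply_tmul, hφx n, RCLike.ofReal_real_eq_id, id]
    exact mul_le_mul (hxδ n) (hψy n).le (by positivity) (norm_nonneg _)
  obtain ⟨n, hn⟩ := (hlim.eventually (gt_mem_nhds (by positivity : 0 < δ * (ε / 2)))).exists
  exact (hlow n).not_gt hn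

/-- If neither `E` nor `F*` has the Schur property and every operator `F* → E**` is
completely continuous, then `E ⊗̂ε F` fails the Dunford–Pettis property. -/
theorem injectiveTensorProduct_not_dunfordPettis
    {E F X : Type*} [NormedAddCommGroup E] [NormedSpace ℝ E] [CompleteSpace E]
    [NormedAddCommGroup F] [NormedSpace ℝ F] [CompleteSpace F]
    [NormedAddCommGroup X] [NormedSpace ℝ X] [CompleteSpace X]
    (h : InjectiveTensorProduct X E F)
    (hE : ¬ SchurProperty E)
    (hF : ¬ SchurProperty (F →L[ℝ] ℝ))
    (hcc : ∀ T : (F →L[ℝ] ℝ) →L[ℝ] ((E →L[ℝ] ℝ) →L[ℝ] ℝ),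
      CompletelyContinuous (E := F →L[ℝ] ℝ) (F := (E →L[ℝ] ℝ) →L[ℝ] ℝ) T) :
    ¬ DunfordPettisProperty X :=
  injectiveTensorProduct_not_dunfordPettis_general h hE hF hcc
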